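/- Let r : λ → ρ be a non-collapsing rule, μ : s → t a rewrite step with s = C[λσ] at hole position q and t = C[ρσ], and L a labeling of μ as in the labeled rewrite-step construction. If w ∈ Pos(t) is involved in μ, i.e., w = q.w'' with w'' ∈ Pos(ρσ), then the set of origin positions ◁_μ^L w contains all positions { q.v' | v' ∈ Pos(λ□) }, i.e., the entire redex pattern of r in s. -/

import Mathlib

open scoped Classical

abbrev Pos := List ℕ

/-- Ground terms over a signature `F` (variadic). -/
inductive GTerm (F : Type) : Type
  | fn : F → List (GTerm F) → GTerm F

/-- Term slices: terms over `F ∪ {•}`. -/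
inductive STerm (F : Type) : Type
  | bullet : STerm F
  | fn : F → List (STerm F) → STerm F

/-- Terms with variables over `F`. -/
inductive VTerm (F : Type) : Type
  | var : ℕ → VTerm F
  | fn : F → List (VTerm F) → VTerm F

variable {F : Type}

def GTerm.subtermAt : Pos → GTerm F → Option (GTerm F)
  | [], t => some t
  | i :: p, .fn _ args => (args[i]?).bind (GTerm.subtermAt p)

def GTerm.isPos (p : Pos) (t : GTerm F) : Prop := (GTerm.subtermAt p t).isSome

def GTerm.rootSym : GTerm F → F
  | .fn f _ => f

def GTerm.rootSymAt (p : Pos) (t : GTerm F) : Option F :=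
  (GTerm.subtermAt p t).map GTerm.rootSym

def STerm.subtermAt : Pos → STerm F → Option (STerm F)
  | [], t => some t
  | _ :: _, .bullet => none
  | i :: p, .fn _ args => (args[i]?).bind (STerm.subtermAt p)

def STerm.rootSym : STerm F → Option F
  | .bullet => none
  | .fn f _ => some f

def STerm.rootSymAt (p : Pos) (t : STerm F) : Option F :=
  (STerm.subtermAt p t).bind STerm.rootSym

/-- Non-`•` positions of a term slice. -/
def STerm.isPos (p : Pos) (t : STerm F) : Prop :=
  ∃ u, STerm.subtermAt p t = some u ∧ u ≠ .bullet

def VTerm.subtermAt : Pos → VTerm F → Option (VTerm F)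
  | [], t => some t
  | _ :: _, .var _ => none
  | i :: p, .fn _ args => (args[i]?).bind (VTerm.subtermAt p)

def VTerm.rootSym : VTerm F → Option F
  | .var _ => none
  | .fn f _ => some f

def VTerm.rootSymAt (p : Pos) (t : VTerm F) : Option F :=
  (VTerm.subtermAt p t).bind VTerm.rootSym

/-- Positions of the redex/contractum pattern: non-variable positions. -/
def VTerm.patPos (p : Pos) (t : VTerm F) : Prop :=
  ∃ f args, VTerm.subtermAt p t = some (.fn f args)

mutual
  def VTerm.subst (σ : ℕ → GTerm F) : VTerm F → GTerm F
    | .var n => σ n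
    | .fn f args => .fn f (VTerm.substList σ args)
  def VTerm.substList (σ : ℕ → GTerm F) : List (VTerm F) → List (GTerm F)
    | [] => []
    | a :: as => VTerm.subst σ a :: VTerm.substList σ as
end

mutual
  def GTerm.replaceAt : GTerm F → Pos → GTerm F → GTerm F
    | _, [], r => r
    | .fn f args, i :: p, r => .fn f (GTerm.replaceAtList args i p r)
  def GTerm.replaceAtList : List (GTerm F) → ℕ → Pos → GTerm F → List (GTerm F)
    | [], _, _, _ => []
    | a :: as, 0, p, r => GTerm.replaceAt a p r :: as
    | a :: as, n + 1, p, r => a :: GTerm.replaceAtList as n p r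
end

mutual
  def STerm.replaceAt : STerm F → Pos → STerm F → STerm F
    | _, [], r => r
    | .bullet, _ :: _, _ => .bullet
    | .fn f args, i :: p, r => .fn f (STerm.replaceAtList args i p r)
  def STerm.replaceAtList : List (STerm F) → ℕ → Pos → STerm F → List (STerm F)
    | [], _, _, _ => []
    | a :: as, 0, p, r => STerm.replaceAt a p r :: as
    | a :: as, n + 1, p, r => a :: STerm.replaceAtList as n p r
end

mutual
  noncomputable def GTerm.slRec (P : Set Pos) : GTerm F → Pos → STerm F
    | .fn f args, p =>
        if ∃ w, (p ++ w) ∈ P then .fn f (GTerm.slRecList P args p 0) else .bullet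
  noncomputable def GTerm.slRecList (P : Set Pos) : List (GTerm F) → Pos → ℕ → List (STerm F)
    | [], _, _ => []
    | a :: as, p, i => GTerm.slRec P a (p ++ [i]) :: GTerm.slRecList P as p (i + 1)
end

/-- `slice(t,P)`. -/
noncomputable def GTerm.slice (t : GTerm F) (P : Set Pos) : STerm F := GTerm.slRec P t []

/-- Concretization: `Conc t• t'` iff replacing the `•`s of `t•` by distinct fresh
variables yields a term more general than `t'`. -/
inductive Conc {F : Type} : STerm F → GTerm F → Prop
  | bullet (t : GTerm F) : Conc .bullet t
  | fn (f : F) (as : List (STerm F)) (bs : List (GTerm F))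
      (hlen : as.length = bs.length)
      (h : ∀ (i : ℕ) (a : STerm F) (b : GTerm F),
            as[i]? = some a → bs[i]? = some b → Conc a b) :
      Conc (.fn f as) (.fn f bs)

/-- Origin positions `◁_μ^L w` of a labeled rewrite step `t0 → t1`. -/
def originSet {α : Type} (t0 t1 : GTerm F) (Ls Lt : Pos → Set α) (w : Pos) : Set Pos :=
  {v | GTerm.isPos v t0 ∧ ∃ p, GTerm.isPos p t1 ∧ p <+: w ∧ Ls v ⊆ Lt p}

/-- A rewrite step with rule `lam → rho` at position `q`. -/
def RewritesAt (lam rho : VTerm F) (q : Pos) (t0 t1 : GTerm F) : Prop :=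
  ∃ σ : ℕ → GTerm F, GTerm.subtermAt q t0 = some (VTerm.subst σ lam) ∧
    t1 = GTerm.replaceAt t0 q (VTerm.subst σ rho)

def leftLinear (lam : VTerm F) : Prop :=
  ∀ n p p', VTerm.subtermAt p lam = some (.var n) →
    VTerm.subtermAt p' lam = some (.var n) → p = p'

def nonCollapsing (rho : VTerm F) : Prop := ∀ n, rho ≠ .var n
/-- The labeling of an (elementary) rewrite step `t0 = C[λσ] → C[ρσ] = t1` at hole
position `q`: every position of `t0` (context, redex pattern, substitution part) carries
a distinct fresh atomic label; context and substitution positions of `t1` carry the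
same labels as the corresponding positions of `t0`; every contractum-pattern symbol of
`t1` carries the union of all the redex-pattern labels. -/
structure ElemStepLabeling (F α : Type) (lam rho : VTerm F) (q : Pos) (σ : ℕ → GTerm F)
    (t0 t1 : GTerm F) (Ls Lt : Pos → Set α) : Prop where
  hsub : GTerm.subtermAt q t0 = some (VTerm.subst σ lam)
  hrepl : t1 = GTerm.replaceAt t0 q (VTerm.subst σ rho)
  atoms : ∀ v, GTerm.isPos v t0 → ∃ a, Ls v = {a}
  inj : ∀ v w, GTerm.isPos v t0 → GTerm.isPos w t0 → Ls v = Ls w → v = w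
  ctx_eq : ∀ v, ¬ q <+: v → Lt v = Ls v
  contr : ∀ u', VTerm.patPos u' rho →
      Lt (q ++ u') = ⋃ v' ∈ {p : Pos | VTerm.patPos p lam}, Ls (q ++ v')
  subst_eq : ∀ (u' : Pos) (n : ℕ) (v'' : Pos), VTerm.subtermAt u' rho = some (.var n) →
      ∀ v', VTerm.subtermAt v' lam = some (.var n) →
        Lt (q ++ u' ++ v'') = Ls (q ++ v' ++ v'')
/-- The labeling of a rewrite step `t0 = C[λσ] → C[ρσ] = t1` at hole position `q`
by a (possibly nonleft-linear) non-collapsing rule: context and substitution-introduced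
positions keep identical labels on both sides, and every contractum-pattern symbol of
`t1` carries the union of all the redex-pattern labels. -/
structure StepLabelingNC (F α : Type) (lam rho : VTerm F) (q : Pos) (σ : ℕ → GTerm F)
    (t0 t1 : GTerm F) (Ls Lt : Pos → Set α) : Prop where
  hsub : GTerm.subtermAt q t0 = some (VTerm.subst σ lam)
  hrepl : t1 = GTerm.replaceAt t0 q (VTerm.subst σ rho)
  ctx_eq : ∀ v, ¬ q <+: v → Lt v = Ls v
  contr : ∀ u', VTerm.patPos u' rho →
      Lt (q ++ u') = ⋃ v' ∈ {p : Pos | VTerm.patPos p lam}, Ls (q ++ v')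
  subst_eq : ∀ (u' : Pos) (n : ℕ) (v'' : Pos), VTerm.subtermAt u' rho = some (.var n) →
      ∀ v', VTerm.subtermAt v' lam = some (.var n) →
        Lt (q ++ u' ++ v'') = Ls (q ++ v' ++ v'')

lemma VTerm.substList_eq_map (σ : ℕ → GTerm F) (as : List (VTerm F)) :
    VTerm.substList σ as = as.map (VTerm.subst σ) := by
  induction as with
  | nil => rfl
  | cons a as ih => simp [VTerm.substList, ih]

lemma VTerm.subtermAt_subst (σ : ℕ → GTerm F) :
    ∀ (p : Pos) (t u : VTerm F), VTerm.subtermAt p t = some u →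
      GTerm.subtermAt p (VTerm.subst σ t) = some (VTerm.subst σ u) := by
  intro p
  induction p with
  | nil => intro t u h; simp [VTerm.subtermAt] at h; simp [GTerm.subtermAt, h]
  | cons i p ih =>
    intro t u h
    cases t with
    | var n => simp [VTerm.subtermAt] at h
    | fn f args =>
      simp [VTerm.subtermAt, Option.bind_eq_some_iff] at h
      obtain ⟨a, ha, h2⟩ := h
      have hg : (args.map (VTerm.subst σ))[i]? = some (VTerm.subst σ a) := by
        simp [List.getElem?_map, ha]
      simp only [VTerm.subst, GTerm.subtermAt, VTerm.substList_eq_map, hg, Option.bind_some]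
      exact ih a u h2

lemma GTerm.replaceAtList_getElem? :
    ∀ (args : List (GTerm F)) (i : ℕ) (p : Pos) (r a : GTerm F), args[i]? = some a →
      (GTerm.replaceAtList args i p r)[i]? = some (GTerm.replaceAt a p r) := by
  intro args
  induction args with
  | nil => intro i p r a h; simp at h
  | cons b bs ih =>
    intro i p r a h
    cases i with
    | zero => simp at h; simp [GTerm.replaceAtList, h]
    | succ n => simp at h; simpa [GTerm.replaceAtList] using ih n p r a h

lemma GTerm.subtermAt_replaceAt :
    ∀ (q : Pos) (t r : GTerm F), (GTerm.subtermAt q t).isSome →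
      GTerm.subtermAt q (GTerm.replaceAt t q r) = some r := by
  intro q
  induction q with
  | nil => intro t r _; cases t <;> simp [GTerm.replaceAt, GTerm.subtermAt]
  | cons i p ih =>
    intro t r h
    cases t with
    | fn f args =>
      simp [GTerm.subtermAt, Option.isSome_iff_exists, Option.bind_eq_some_iff] at h
      obtain ⟨u, a, ha, h2⟩ := h
      simp [GTerm.replaceAt, GTerm.subtermAt, Option.bind_eq_some_iff]
      refine ⟨GTerm.replaceAt a p r, GTerm.replaceAtList_getElem? args i p r a ha, ?_⟩
      exact ih a r (by simp [h2])

lemma GTerm.subtermAt_append :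
    ∀ (p q : Pos) (t : GTerm F),
      GTerm.subtermAt (p ++ q) t = (GTerm.subtermAt p t).bind (GTerm.subtermAt q) := by
  intro p
  induction p with
  | nil => intro q t; simp [GTerm.subtermAt]
  | cons i p ih =>
    intro q t
    cases t with
    | fn f args =>
      simp only [List.cons_append, GTerm.subtermAt]
      cases h : args[i]? with
      | none => simp
      | some a => simp [ih q a]

theorem origin_contains_redex_pattern {F α : Type} (lam rho : VTerm F) (q : Pos)
    (σ : ℕ → GTerm F) (t0 t1 : GTerm F) (Ls Lt : Pos → Set α)
    (hL : StepLabelingNC F α lam rho q σ t0 t1 Ls Lt)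
    (hnc : nonCollapsing rho)
    (w : Pos) (hw : GTerm.isPos w t1) (hqw : q <+: w) :
    ∀ v', VTerm.patPos v' lam → (q ++ v') ∈ originSet t0 t1 Ls Lt w := by
  intro v' hv'
  obtain ⟨f, args, hfa⟩ := hv'
  refine ⟨?_, q, ?_, hqw, ?_⟩
  · -- isPos (q ++ v') t0
    have := VTerm.subtermAt_subst σ v' lam _ hfa
    unfold GTerm.isPos
    rw [GTerm.subtermAt_append, hL.hsub]
    simp [this]
  · -- isPos q t1
    unfold GTerm.isPos
    rw [hL.hrepl, GTerm.subtermAt_replaceAt q t0 _ (by simp [hL.hsub])]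
    simp
  · -- Ls (q ++ v') ⊆ Lt q
    have hpat : VTerm.patPos [] rho := by
      cases rho with
      | var n => exact absurd rfl (hnc n)
      | fn g bs => exact ⟨g, bs, rfl⟩
    have := hL.contr [] hpat
    simp only [List.append_nil] at this
    rw [this]
    exact Set.subset_biUnion_of_mem (u := fun v' => Ls (q ++ v')) ⟨f, args, hfa⟩
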